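/- Let g : ℝ^d → ℝ ∪ {+∞} be proper, convex, lower semicontinuous and let f : ℝ^d → ℝ be a convex differentiable function whose gradient ∇f is L-Lipschitz. Fix x ∈ ℝ^d, a stepsize α with 0 < α ≤ 1/L, and set x⁺ = prox_{αg}(x − α∇f(x)). Then (g+f)(x⁺) ≤ (g+f)(x); in particular, if (x_k) is a proximal-gradient sequence with stepsizes α_k ∈ (0, 1/L], the values (g+f)(x_k) are nonincreasing in k. -/

import Mathlib

/-!
Testing the prox inequality at `z = x` gives, with `u = x⁺ - x`,
`g x⁺ + ⟪∇f x, u⟫ + ‖u‖² / (2α) ≤ g x`, while the descent lemma for an `L`-smooth `f` gives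
`f x⁺ ≤ f x + ⟪∇f x, u⟫ + (L/2) ‖u‖²`. Adding them and using `L ≤ 1/α` yields the decrease.
Only real quantities are moved across the `EReal` inequality, so infinite values of `g` need
no separate treatment.
-/

open scoped InnerProductSpace

/-- Convexity for an extended-real-valued function. -/
def ERealConvex {d : ℕ} (g : EuclideanSpace ℝ (Fin d) → EReal) : Prop :=
  ∀ x y : EuclideanSpace ℝ (Fin d), ∀ a b : ℝ, 0 ≤ a → 0 ≤ b → a + b = 1 →
    g (a • x + b • y) ≤ (a : EReal) * g x + (b : EReal) * g y

/-- `g` is proper: it never takes the value `⊥` and is not identically `⊤`. -/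
def ERealProper {d : ℕ} (g : EuclideanSpace ℝ (Fin d) → EReal) : Prop :=
  (∀ x, g x ≠ ⊥) ∧ (∃ x, g x ≠ ⊤)

/-- `p = prox_{αg}(y)`, i.e. `p` minimizes `z ↦ g z + (1/(2α))‖z - y‖²`. -/
def IsProx {d : ℕ} (g : EuclideanSpace ℝ (Fin d) → EReal) (α : ℝ)
    (y p : EuclideanSpace ℝ (Fin d)) : Prop :=
  ∀ z, g p + ((1 / (2 * α) * ‖p - y‖ ^ 2 : ℝ) : EReal)
      ≤ g z + ((1 / (2 * α) * ‖z - y‖ ^ 2 : ℝ) : EReal)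

open scoped RealInnerProductSpace

theorem EReal.add_coe_le_add_coe_of_add_coe_le {a b : EReal} {p q r s : ℝ}
    (h : a + r ≤ b + s) (hpq : p + s ≤ q + r) : a + p ≤ b + q :=
  calc a + p ≤ a + ((r + (q - s) : ℝ) : EReal) := by gcongr; linarith
    _ = a + r + (q - s : ℝ) := by rw [EReal.coe_add, add_assoc]
    _ ≤ b + s + (q - s : ℝ) := by gcongr
    _ = b + q := by rw [add_assoc, ← EReal.coe_add, add_sub_cancel]

section GradientLipschitz

variable {E : Type*} [NormedAddCommGroup E] [InnerProductSpace ℝ E]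
  {f : E → ℝ} {f' : E → E} {L : ℝ}

theorem inner_sub_le_mul_sq_of_lipschitz (hf_lip : ∀ x y, ‖f' x - f' y‖ ≤ L * ‖x - y‖)
    (x u : E) {t : ℝ} (ht : 0 ≤ t) : ⟪f' (x + t • u) - f' x, u⟫ ≤ L * t * ‖u‖ ^ 2 :=
  calc ⟪f' (x + t • u) - f' x, u⟫ ≤ ‖f' (x + t • u) - f' x‖ * ‖u‖ := real_inner_le_norm _ _
    _ ≤ L * ‖t • u‖ * ‖u‖ := by gcongr; simpa using hf_lip (x + t • u) x
    _ = L * t * ‖u‖ ^ 2 := by rw [norm_smul, Real.norm_of_nonneg ht]; ring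

variable [CompleteSpace E]

theorem HasGradientAt.hasDerivAt_comp_add_smul {x u v : E} {t : ℝ}
    (hf : HasGradientAt f v (x + t • u)) : HasDerivAt (fun s : ℝ => f (x + s • u)) ⟪v, u⟫ t := by
  have hline : HasDerivAt (fun s : ℝ => x + s • u) u t := by
    simpa using ((hasDerivAt_id t).smul_const u).const_add x
  exact hf.hasFDerivAt.comp_hasDerivAt t hline

theorem le_add_inner_add_sq_of_gradient_lipschitz (hf_diff : ∀ y, HasGradientAt f (f' y) y)
    (hf_lip : ∀ x y, ‖f' x - f' y‖ ≤ L * ‖x - y‖) (x y : E) :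
    f y ≤ f x + ⟪f' x, y - x⟫ + L / 2 * ‖y - x‖ ^ 2 := by
  set u := y - x
  -- the gap to the quadratic upper model along the segment is antitone, since its derivative
  -- is `⟪f' (x + t • u) - f' x, u⟫ - L * t * ‖u‖ ^ 2 ≤ 0`
  let gap : ℝ → ℝ := fun t => f (x + t • u) - t * ⟪f' x, u⟫ - L * t ^ 2 / 2 * ‖u‖ ^ 2
  have hgap : ∀ t, HasDerivAt gap
      (⟪f' (x + t • u), u⟫ - ⟪f' x, u⟫ - L * t * ‖u‖ ^ 2) t := by
    intro t
    have hquad := (((hasDerivAt_pow 2 t).const_mul L).div_const 2).mul_const (‖u‖ ^ 2)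
    refine (((hf_diff (x + t • u)).hasDerivAt_comp_add_smul.sub
      ((hasDerivAt_id' t).mul_const ⟪f' x, u⟫)).sub hquad).congr_deriv ?_
    push_cast
    ring
  have hanti : AntitoneOn gap (Set.Ici 0) := by
    refine antitoneOn_of_hasDerivWithinAt_nonpos (convex_Ici 0)
      (fun t _ => (hgap t).continuousAt.continuousWithinAt)
      (fun t _ => (hgap t).hasDerivWithinAt) fun t ht => ?_
    rw [interior_Ici] at ht
    have := inner_sub_le_mul_sq_of_lipschitz hf_lip x u ht.le
    rw [inner_sub_left] at this
    linarith
  have h10 := hanti Set.self_mem_Ici (Set.mem_Ici.2 zero_le_one) zero_le_one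
  simp only [gap, u, one_smul, zero_smul, add_zero, add_sub_cancel] at h10
  norm_num at h10
  linarith

end GradientLipschitz

theorem IsProx.add_le_add_of_gradient_lipschitz {d : ℕ} {L : ℝ}
    {g : EuclideanSpace ℝ (Fin d) → EReal} {f : EuclideanSpace ℝ (Fin d) → ℝ}
    {f' : EuclideanSpace ℝ (Fin d) → EuclideanSpace ℝ (Fin d)}
    (hf_diff : ∀ y, HasGradientAt f (f' y) y) (hf_lip : ∀ x y, ‖f' x - f' y‖ ≤ L * ‖x - y‖)
    {x : EuclideanSpace ℝ (Fin d)} {α : ℝ} (hα : 0 < α) (hαL : α ≤ 1 / L)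
    {xp : EuclideanSpace ℝ (Fin d)} (hxp : IsProx g α (x - α • f' x) xp) :
    g xp + (f xp : EReal) ≤ g x + (f x : EReal) := by
  refine EReal.add_coe_le_add_coe_of_add_coe_le (hxp x) ?_
  set u := xp - x
  set v := f' x
  have hsq_xp : ‖xp - (x - α • v)‖ ^ 2 = ‖u‖ ^ 2 + 2 * α * ⟪v, u⟫ + α ^ 2 * ‖v‖ ^ 2 := by
    rw [show xp - (x - α • v) = u + α • v by simp only [u]; abel, norm_add_sq_real,
      real_inner_smul_right, real_inner_comm, norm_smul, Real.norm_of_nonneg hα.le]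
    ring
  have hsq_x : ‖x - (x - α • v)‖ ^ 2 = α ^ 2 * ‖v‖ ^ 2 := by
    rw [sub_sub_cancel, norm_smul, Real.norm_of_nonneg hα.le]
    ring
  have hdescent := le_add_inner_add_sq_of_gradient_lipschitz hf_diff hf_lip x xp
  have hL : 0 < L := one_div_pos.mp (hα.trans_le hαL)
  have hquad : L / 2 * ‖u‖ ^ 2 ≤ 1 / (2 * α) * ‖u‖ ^ 2 := by
    calc L / 2 * ‖u‖ ^ 2 ≤ 1 / α / 2 * ‖u‖ ^ 2 := by gcongr; exact (le_one_div hα hL).mp hαL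
      _ = 1 / (2 * α) * ‖u‖ ^ 2 := by ring
  rw [hsq_xp, hsq_x]
  have hexpand : 1 / (2 * α) * (‖u‖ ^ 2 + 2 * α * ⟪v, u⟫ + α ^ 2 * ‖v‖ ^ 2)
      = 1 / (2 * α) * ‖u‖ ^ 2 + ⟪v, u⟫ + 1 / (2 * α) * (α ^ 2 * ‖v‖ ^ 2) := by
    field_simp
  linarith

theorem proxGrad_objective_decrease_general {d : ℕ} {L : ℝ}
    (g : EuclideanSpace ℝ (Fin d) → EReal)
    (f : EuclideanSpace ℝ (Fin d) → ℝ)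
    (f' : EuclideanSpace ℝ (Fin d) → EuclideanSpace ℝ (Fin d))
    (hf_diff : ∀ y, HasGradientAt f (f' y) y)
    (hf_lip : ∀ x y, ‖f' x - f' y‖ ≤ L * ‖x - y‖)
    (x : EuclideanSpace ℝ (Fin d)) (α : ℝ) (hα : 0 < α) (hαL : α ≤ 1 / L)
    (xp : EuclideanSpace ℝ (Fin d))
    (hxp : IsProx g α (x - α • f' x) xp)
    (xseq : ℕ → EuclideanSpace ℝ (Fin d)) (αseq : ℕ → ℝ)
    (hαseq : ∀ k, 0 < αseq k ∧ αseq k ≤ 1 / L)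
    (hxseq : ∀ k, IsProx g (αseq k) (xseq k - αseq k • f' (xseq k)) (xseq (k + 1))) :
    g xp + (f xp : EReal) ≤ g x + (f x : EReal) ∧
      Antitone fun k => g (xseq k) + (f (xseq k) : EReal) :=
  ⟨hxp.add_le_add_of_gradient_lipschitz hf_diff hf_lip hα hαL,
    antitone_nat_of_succ_le fun k =>
      (hxseq k).add_le_add_of_gradient_lipschitz hf_diff hf_lip (hαseq k).1 (hαseq k).2⟩

/-- A proximal-gradient step decreases the objective value `(g+f)`; in particular the
objective values along a proximal-gradient sequence are nonincreasing. -/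
theorem proxGrad_objective_decrease {d : ℕ} {L : ℝ}
    (g : EuclideanSpace ℝ (Fin d) → EReal)
    (hg_proper : ERealProper g) (hg_convex : ERealConvex g)
    (hg_lsc : LowerSemicontinuous g)
    (f : EuclideanSpace ℝ (Fin d) → ℝ)
    (f' : EuclideanSpace ℝ (Fin d) → EuclideanSpace ℝ (Fin d))
    (hf_convex : ConvexOn ℝ Set.univ f)
    (hf_diff : ∀ y, HasGradientAt f (f' y) y)
    (hf_lip : ∀ x y, ‖f' x - f' y‖ ≤ L * ‖x - y‖)
    (x : EuclideanSpace ℝ (Fin d)) (α : ℝ) (hα : 0 < α) (hαL : α ≤ 1 / L)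
    (xp : EuclideanSpace ℝ (Fin d))
    (hxp : IsProx g α (x - α • f' x) xp)
    (xseq : ℕ → EuclideanSpace ℝ (Fin d)) (αseq : ℕ → ℝ)
    (hαseq : ∀ k, 0 < αseq k ∧ αseq k ≤ 1 / L)
    (hxseq : ∀ k, IsProx g (αseq k) (xseq k - αseq k • f' (xseq k)) (xseq (k + 1))) :
    g xp + (f xp : EReal) ≤ g x + (f x : EReal) ∧
      Antitone fun k => g (xseq k) + (f (xseq k) : EReal) :=
  proxGrad_objective_decrease_general g f f' hf_diff hf_lip x α hα hαL xp hxp xseq αseq hαseq hxseq
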